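/- (KL divergence between Gaussians with spiked covariances) Let Σ_i = t·U_i U_iᵀ + σ²I_p and Σ_j = t·U_j U_jᵀ + σ²I_p with U_i, U_j ∈ O(p,r), t, σ > 0. Then the KL divergence between N(0, Σ_i) and N(0, Σ_j) equals (t²/(2σ²(σ² + t)))·(r − ‖U_iᵀ U_j‖_F²). -/

import Mathlib

/-!
The ratio of determinants in the divergence is `1`: by Sylvester's identity
`det (t • U Uᵀ + s • 1) = s ^ p (1 + t / s) ^ r` for every `U ∈ O(p, r)`. The projection
`N = U_j U_jᵀ` is idempotent, so `(t • N + s • 1)⁻¹ = s⁻¹ • 1 - t / (s (s + t)) • N`, and the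
trace term reduces to `tr (U_i U_iᵀ) = tr N = r` and `tr (N U_i U_iᵀ) = ‖U_iᵀ U_j‖_F²`.
-/

open Matrix

/-- Frobenius norm of a real matrix. -/
noncomputable def frob {m n : ℕ} (A : Matrix (Fin m) (Fin n) ℝ) : ℝ :=
  Real.sqrt (∑ i, ∑ j, (A i j) ^ 2)

/-- KL divergence between the centered `p`-dimensional Gaussians `N(0, Σ0)`
and `N(0, Σ1)`: `(1/2)(tr(Σ1⁻¹Σ0) − p + log(det Σ1/det Σ0))`. -/
noncomputable def klGaussian {p : ℕ} (S0 S1 : Matrix (Fin p) (Fin p) ℝ) : ℝ :=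
  (1 / 2) * (trace (S1⁻¹ * S0) - (p : ℝ) + Real.log (S1.det / S0.det))

namespace Matrix

variable {m n K : Type*} [Fintype m] [Fintype n] [DecidableEq n] [Field K]

theorem frob_sq_eq_trace_mul_transpose {p r : ℕ} (A : Matrix (Fin p) (Fin r) ℝ) :
    frob A ^ 2 = trace (A * Aᵀ) := by
  rw [frob, Real.sq_sqrt (by positivity)]
  simp only [trace, diag, mul_apply, transpose_apply, sq]

theorem trace_mul_transpose_of_transpose_mul_eq_one {U : Matrix m n K} (hU : Uᵀ * U = 1) :
    trace (U * Uᵀ) = Fintype.card n := by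
  rw [trace_mul_comm, hU, trace_one]

theorem isIdempotentElem_mul_transpose {U : Matrix m n K} (hU : Uᵀ * U = 1) :
    IsIdempotentElem (U * Uᵀ) := by
  rw [IsIdempotentElem, Matrix.mul_assoc, ← Matrix.mul_assoc Uᵀ, hU, Matrix.one_mul]

theorem det_smul_mul_transpose_add_smul_one [DecidableEq m] {U : Matrix m n K} (hU : Uᵀ * U = 1)
    (t : K) {s : K} (hs : s ≠ 0) :
    (t • (U * Uᵀ) + s • (1 : Matrix m m K)).det
      = s ^ Fintype.card m * (1 + t / s) ^ Fintype.card n := by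
  have hfactor : t • (U * Uᵀ) + s • (1 : Matrix m m K) = s • (1 + ((t / s) • U) * Uᵀ) := by
    rw [smul_add, smul_mul, smul_smul, mul_div_cancel₀ t hs, add_comm]
  have hsmall : (1 : Matrix n n K) + Uᵀ * ((t / s) • U) = (1 + t / s) • 1 := by
    rw [Matrix.mul_smul, hU, add_smul, one_smul]
  rw [hfactor, det_smul, det_one_add_mul_comm, hsmall, det_smul, det_one, mul_one]

theorem inv_smul_add_smul_one_of_isIdempotentElem {N : Matrix n n K}
    (hN : IsIdempotentElem N) {t s : K} (hs : s ≠ 0) (hst : s + t ≠ 0) :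
    (t • N + s • 1)⁻¹ = s⁻¹ • 1 - (t / (s * (s + t))) • N := by
  apply inv_eq_right_inv
  have hcoeff : t * s⁻¹ - t * (t / (s * (s + t))) - s * (t / (s * (s + t))) = 0 := by
    field_simp
    ring
  calc (t • N + s • 1) * (s⁻¹ • 1 - (t / (s * (s + t))) • N)
      = (t * s⁻¹ - t * (t / (s * (s + t))) - s * (t / (s * (s + t)))) • N
          + (s * s⁻¹) • (1 : Matrix n n K) := by
        simp only [add_mul, mul_sub, smul_mul, Matrix.mul_smul, Matrix.mul_one, Matrix.one_mul,
          smul_smul, hN.eq]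
        module
    _ = 1 := by rw [hcoeff, zero_smul, zero_add, mul_inv_cancel₀ hs, one_smul]

theorem trace_inv_smul_add_smul_one_mul {N : Matrix n n K} (hN : IsIdempotentElem N)
    (M : Matrix n n K) (htrace : trace M = trace N) {t s : K} (hs : s ≠ 0) (hst : s + t ≠ 0) :
    trace ((t • N + s • 1)⁻¹ * (t • M + s • 1))
      = Fintype.card n + t ^ 2 / (s * (s + t)) * (trace M - trace (N * M)) := by
  rw [inv_smul_add_smul_one_of_isIdempotentElem hN hs hst]
  simp only [sub_mul, mul_add, smul_mul, Matrix.mul_smul, Matrix.one_mul, Matrix.mul_one,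
    smul_smul, trace_sub, trace_add, trace_smul, trace_one, smul_eq_mul, ← htrace]
  field_simp
  ring

end Matrix

/-- KL divergence between spiked Gaussians `N(0, tU_iU_iᵀ + σ²I)` and
`N(0, tU_jU_jᵀ + σ²I)` equals `(t²/(2σ²(σ²+t)))(r − ‖U_iᵀU_j‖_F²)`. -/
theorem kl_spiked_gaussians {p r : ℕ}
    (Ui Uj : Matrix (Fin p) (Fin r) ℝ)
    (hUi : Uiᵀ * Ui = 1) (hUj : Ujᵀ * Uj = 1)
    (t σ : ℝ) (ht : 0 < t) (hσ : 0 < σ) :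
    klGaussian (t • (Ui * Uiᵀ) + σ ^ 2 • (1 : Matrix (Fin p) (Fin p) ℝ))
        (t • (Uj * Ujᵀ) + σ ^ 2 • (1 : Matrix (Fin p) (Fin p) ℝ)) =
      t ^ 2 / (2 * σ ^ 2 * (σ ^ 2 + t)) * ((r : ℝ) - frob (Uiᵀ * Uj) ^ 2) := by
  have hs : σ ^ 2 ≠ 0 := by positivity
  have hst : σ ^ 2 + t ≠ 0 := by positivity
  have htrace : trace (Ui * Uiᵀ) = trace (Uj * Ujᵀ) := by
    rw [trace_mul_transpose_of_transpose_mul_eq_one hUi,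
      trace_mul_transpose_of_transpose_mul_eq_one hUj]
  have hcross : trace (Uj * Ujᵀ * (Ui * Uiᵀ)) = frob (Uiᵀ * Uj) ^ 2 := calc
    trace (Uj * Ujᵀ * (Ui * Uiᵀ)) = trace (Uiᵀ * (Uj * Ujᵀ * Ui)) := by
      rw [← Matrix.mul_assoc, trace_mul_comm]
    _ = frob (Uiᵀ * Uj) ^ 2 := by
      rw [frob_sq_eq_trace_mul_transpose, transpose_mul, transpose_transpose]
      simp only [Matrix.mul_assoc]
  have hdet_ne : (σ ^ 2) ^ Fintype.card (Fin p) * (1 + t / σ ^ 2) ^ Fintype.card (Fin r) ≠ 0 := by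
    positivity
  rw [klGaussian, trace_inv_smul_add_smul_one_mul (isIdempotentElem_mul_transpose hUj) _ htrace
      hs hst, hcross, trace_mul_transpose_of_transpose_mul_eq_one hUi,
    det_smul_mul_transpose_add_smul_one hUi t hs, det_smul_mul_transpose_add_smul_one hUj t hs,
    div_self hdet_ne, Real.log_one, Fintype.card_fin, Fintype.card_fin]
  field_simp
  ring
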